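/- Let F = ⟨A, →⟩ be an AAF with n ≥ ℓ ≥ m and let E ⊆ A be ℓmn-admissible. Then (a) for every ordinal ξ, the transfinite iterate D^ξ(E) is ℓmn-admissible; and (b) the least fixed point of D_n^m containing E (which exists since D_n^m is monotone on 𝒫(A) and E ⊆ D_n^m(E)) is an ℓmn-complete extension of F and is contained in every ℓmn-complete extension of F that contains E; in particular there is a ⊆-least ℓmn-complete extension containing E. -/

import Mathlib

open Set

variable {A : Type*}

/-- Graded neutrality function `N_ℓ`: arguments not attacked by `ℓ` distinct members of `E`. -/
def gradedNeutrality (att : A → A → Prop) (ℓ : ℕ) (E : Set A) : Set A :=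
  {a | ¬ ∃ B : Finset A, B.card = ℓ ∧ (↑B : Set A) ⊆ E ∧ ∀ b ∈ B, att b a}

/-- Graded defense function `D_n^m = N_m ∘ N_n`. -/
def gradedDefense (att : A → A → Prop) (m n : ℕ) (E : Set A) : Set A :=
  gradedNeutrality att m (gradedNeutrality att n E)

/-- `E` is ℓ-conflict-free. -/
def IsConflictFree (att : A → A → Prop) (ℓ : ℕ) (E : Set A) : Prop :=
  E ⊆ gradedNeutrality att ℓ E

/-- `E` is ℓmn-admissible. -/
def IsAdmissible (att : A → A → Prop) (ℓ m n : ℕ) (E : Set A) : Prop :=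
  E ⊆ gradedNeutrality att ℓ E ∧ E ⊆ gradedDefense att m n E

/-- `E` is an ℓmn-complete extension. -/
def IsCompleteExt (att : A → A → Prop) (ℓ m n : ℕ) (E : Set A) : Prop :=
  E ⊆ gradedNeutrality att ℓ E ∧ E = gradedDefense att m n E

/-- `E` is an ℓmn-stable extension. -/
def IsStableExt (att : A → A → Prop) (ℓ m n : ℕ) (E : Set A) : Prop :=
  E = gradedNeutrality att n E ∧ E = gradedNeutrality att m E ∧
    E ⊆ gradedNeutrality att ℓ E

/-- The AAF is finitary: every argument has finitely many attackers. -/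
def IsFinitary (att : A → A → Prop) : Prop :=
  ∀ a : A, {b | att b a}.Finite

/-- `E_η^+`: arguments attacked by `η` distinct members of `E`. -/
def rangePlus (att : A → A → Prop) (η : ℕ) (E : Set A) : Set A :=
  {a | ∃ B : Finset A, B.card = η ∧ (↑B : Set A) ⊆ E ∧ ∀ b ∈ B, att b a}

/-- The range `E ∪ E_η^+` of `E`. -/
def rangeOf (att : A → A → Prop) (η : ℕ) (E : Set A) : Set A :=
  E ∪ rangePlus att η E

/-- Reduced meet of the family `X` modulo the ultrafilter `D`. -/
def reducedMeet {I : Type*} (D : Ultrafilter I) (X : I → Set A) : Set A :=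
  {a | {i | a ∈ X i} ∈ D}

/-- `L` is the least fixed point of `f` containing `E`. -/
def IsLfpOver (f : Set A → Set A) (E L : Set A) : Prop :=
  f L = L ∧ E ⊆ L ∧ ∀ L', f L' = L' → E ⊆ L' → L ⊆ L'

/-- `r` is well-founded on `S`: there is no infinite `r`-decreasing sequence in `S`. -/
def WellFoundedOnSet (r : A → A → Prop) (S : Set A) : Prop :=
  ¬ ∃ f : ℕ → A, (∀ i, f i ∈ S) ∧ ∀ i, r (f (i + 1)) (f i)

universe u v

section Helpers

variable {A : Type*} (att : A → A → Prop)

lemma neut_anti {ℓ : ℕ} {E F : Set A} (h : E ⊆ F) :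
    gradedNeutrality att ℓ F ⊆ gradedNeutrality att ℓ E := by
  intro a ha hcon
  obtain ⟨B, hc, hB, hatt⟩ := hcon
  exact ha ⟨B, hc, hB.trans h, hatt⟩

lemma neut_le {ℓ n : ℕ} (h : ℓ ≤ n) (E : Set A) :
    gradedNeutrality att ℓ E ⊆ gradedNeutrality att n E := by
  intro a ha hcon
  obtain ⟨B, hc, hB, hatt⟩ := hcon
  obtain ⟨B', hB's, hB'c⟩ := Finset.exists_subset_card_eq (s := B) (n := ℓ) (by omega)
  exact ha ⟨B', hB'c, (Finset.coe_subset.mpr hB's).trans hB, fun b hb => hatt b (hB's hb)⟩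

lemma defense_mono {m n : ℕ} {E F : Set A} (h : E ⊆ F) :
    gradedDefense att m n E ⊆ gradedDefense att m n F :=
  neut_anti att (neut_anti att h)

lemma defense_subset_neut {m n : ℕ} (hmn : m ≤ n) {E : Set A}
    (hE : E ⊆ gradedNeutrality att n E) :
    gradedDefense att m n E ⊆ gradedNeutrality att n E := by
  intro a ha
  simp only [gradedNeutrality, Set.mem_setOf_eq]
  rintro ⟨B, hc, hB, hatt⟩
  obtain ⟨B', hB's, hB'c⟩ := Finset.exists_subset_card_eq (s := B) (n := m) (by omega)
  exact ha ⟨B', hB'c, ((Finset.coe_subset.mpr hB's).trans hB).trans hE,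
    fun b hb => hatt b (hB's hb)⟩

lemma defense_cf {ℓ m n : ℕ} (hml : m ≤ ℓ) (hln : ℓ ≤ n) {E : Set A}
    (hE : E ⊆ gradedNeutrality att n E) :
    gradedDefense att m n E ⊆ gradedNeutrality att ℓ (gradedDefense att m n E) := by
  intro a ha
  simp only [gradedNeutrality, Set.mem_setOf_eq]
  rintro ⟨B, hc, hB, hatt⟩
  obtain ⟨B', hB's, hB'c⟩ := Finset.exists_subset_card_eq (s := B) (n := m) (by omega)
  exact ha ⟨B', hB'c,
    ((Finset.coe_subset.mpr hB's).trans hB).trans (defense_subset_neut att (hml.trans hln) hE),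
    fun b hb => hatt b (hB's hb)⟩

lemma iter_admissible (ℓ m n : ℕ) (hml : m ≤ ℓ) (hln : ℓ ≤ n)
    (E : Set A) (hE : IsAdmissible att ℓ m n E)
    (Dit : Ordinal.{v} → Set A)
    (h0 : Dit 0 = E)
    (hsucc : ∀ ξ : Ordinal, Dit (ξ + 1) = gradedDefense att m n (Dit ξ))
    (hlim : ∀ ξ : Ordinal, Order.IsSuccLimit ξ → Dit ξ = ⋃ (o : Ordinal) (_ : o < ξ), Dit o) :
    ∀ ξ : Ordinal, IsAdmissible att ℓ m n (Dit ξ) ∧ ∀ η, η ≤ ξ → Dit η ⊆ Dit ξ := by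
  intro ξ
  induction ξ using Ordinal.limitRecOn with
  | zero =>
      refine ⟨h0 ▸ hE, fun η hη => ?_⟩
      rw [nonpos_iff_eq_zero.mp hη]
  | add_one o ih =>
      have hs := hsucc o
      rw [Ordinal.add_one_eq_succ] at hs ⊢
      have hcfn : Dit o ⊆ gradedNeutrality att n (Dit o) :=
        (ih.1.1).trans (neut_le att hln _)
      refine ⟨⟨?_, ?_⟩, ?_⟩
      · rw [hs]; exact defense_cf att hml hln hcfn
      · rw [hs]; exact defense_mono att ih.1.2
      · intro η hη
        rcases eq_or_lt_of_le hη with h | h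
        · rw [h]
        · have hle : η ≤ o := Order.lt_succ_iff.mp h
          rw [hs]; exact (ih.2 η hle).trans ih.1.2
  | limit o ho ih =>
      have hU := hlim o ho
      have hmono : ∀ η, η ≤ o → Dit η ⊆ Dit o := by
        intro η hη
        rcases eq_or_lt_of_le hη with h | h
        · rw [h]
        · rw [hU]; intro a ha; exact Set.mem_iUnion₂.mpr ⟨η, h, ha⟩
      have hdef : Dit o ⊆ gradedDefense att m n (Dit o) := by
        intro a ha
        rw [hU] at ha
        obtain ⟨η, hη, ha⟩ := Set.mem_iUnion₂.mp ha
        exact defense_mono att (hmono η hη.le) ((ih η hη).1.2 ha)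
      refine ⟨⟨?_, hdef⟩, hmono⟩
      intro a ha
      simp only [gradedNeutrality, Set.mem_setOf_eq]
      rintro ⟨B, hc, hB, hatt⟩
      have ha' := ha
      rw [hU] at ha'
      obtain ⟨ξ₀, hξ₀, ha₀⟩ := Set.mem_iUnion₂.mp ha'
      classical
      have hgex : ∀ b ∈ B, ∃ η : Ordinal, η < o ∧ b ∈ Dit η := by
        intro b hb
        have hbo := hB (Finset.mem_coe.mpr hb)
        rw [hU] at hbo
        obtain ⟨η, hη, hbη⟩ := Set.mem_iUnion₂.mp hbo
        exact ⟨η, hη, hbη⟩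
      set g : A → Ordinal := fun b =>
        if h : ∃ η : Ordinal, η < o ∧ b ∈ Dit η then h.choose else 0 with hg
      have hgb : ∀ b ∈ B, g b < o ∧ b ∈ Dit (g b) := by
        intro b hb
        have h := hgex b hb
        simp only [hg, dif_pos h]
        exact h.choose_spec
      set μ := max ξ₀ (B.sup g) with hμdef
      have hμ : μ < o :=
        max_lt hξ₀ ((Finset.sup_lt_iff ho.pos).mpr fun b hb => (hgb b hb).1)
      have hBμ : (↑B : Set A) ⊆ Dit μ := by
        intro b hb
        have hb' : b ∈ B := Finset.mem_coe.mp hb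
        have h1 : g b ≤ μ := le_trans (Finset.le_sup hb') (le_max_right _ _)
        exact (ih μ hμ).2 (g b) h1 (hgb b hb').2
      have haμ : a ∈ Dit μ := (ih μ hμ).2 ξ₀ (le_max_left _ _) ha₀
      have hcf := (ih μ hμ).1.1 haμ
      simp only [gradedNeutrality, Set.mem_setOf_eq] at hcf
      exact hcf ⟨B, hc, hBμ, hatt⟩

lemma exists_fixpoint {A : Type u} (att : A → A → Prop) (m n : ℕ)
    (Dit : Ordinal.{u} → Set A)
    (hsucc : ∀ ξ : Ordinal, Dit (ξ + 1) = gradedDefense att m n (Dit ξ))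
    (hmono : ∀ ξ η : Ordinal, η ≤ ξ → Dit η ⊆ Dit ξ)
    (hincl : ∀ ξ : Ordinal, Dit ξ ⊆ gradedDefense att m n (Dit ξ)) :
    ∃ ξ : Ordinal, gradedDefense att m n (Dit ξ) = Dit ξ := by
  by_contra hcon
  push_neg at hcon
  have hstrict : ∀ η ξ : Ordinal.{u}, η < ξ → Dit η ≠ Dit ξ := by
    intro η ξ h heq
    have h1 : Dit (η + 1) ⊆ Dit ξ :=
      hmono ξ (η + 1) (by rwa [Ordinal.add_one_eq_succ, Order.succ_le_iff])
    rw [hsucc η, ← heq] at h1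
    exact hcon η (subset_antisymm h1 (hincl η))
  have hinj : Function.Injective Dit := by
    intro η ξ h
    rcases lt_trichotomy η ξ with hl | he | hl
    · exact absurd h (hstrict _ _ hl)
    · exact he
    · exact absurd h.symm (hstrict _ _ hl)
  exact not_small_ordinal.{u, u} (small_of_injective hinj)

lemma exists_lfp {A : Type*} (att : A → A → Prop) (m n : ℕ)
    (E : Set A) (hE : E ⊆ gradedDefense att m n E) :
    ∃ L, IsLfpOver (gradedDefense att m n) E L := by
  set S : Set A := ⋂₀ {X | gradedDefense att m n X ⊆ X ∧ E ⊆ X} with hS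
  have hEle : E ⊆ S := fun a ha => Set.mem_sInter.mpr fun X hX => hX.2 ha
  have hSle : ∀ X, gradedDefense att m n X ⊆ X → E ⊆ X → S ⊆ X :=
    fun X h1 h2 => Set.sInter_subset_of_mem ⟨h1, h2⟩
  have hDS : gradedDefense att m n S ⊆ S := by
    intro a ha
    refine Set.mem_sInter.mpr fun X hX => ?_
    exact hX.1 (defense_mono att (hSle X hX.1 hX.2) ha)
  have hED : E ⊆ gradedDefense att m n S := hE.trans (defense_mono att hEle)
  have hSD : S ⊆ gradedDefense att m n S := hSle _ (defense_mono att hDS) hED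
  exact ⟨S, subset_antisymm hDS hSD, hEle, fun L' h1 h2 => hSle L' h1.subset h2⟩

lemma least_complete {A : Type u} (att : A → A → Prop) (ℓ m n : ℕ)
    (hml : m ≤ ℓ) (hln : ℓ ≤ n)
    (E : Set A) (hE : IsAdmissible att ℓ m n E) :
    ∀ L : Set A, IsLfpOver (gradedDefense att m n) E L →
      IsCompleteExt att ℓ m n L ∧
        ∀ E' : Set A, IsCompleteExt att ℓ m n E' → E ⊆ E' → L ⊆ E' := by
  intro L hL
  let Dit : Ordinal.{u} → Set A := fun ξ =>
    Ordinal.limitRecOn ξ E (fun _ ih => gradedDefense att m n ih)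
      (fun o _ ih => ⋃ (η : Ordinal) (h : η < o), ih η h)
  have h0 : Dit 0 = E := Ordinal.limitRecOn_zero _ _ _
  have hsucc : ∀ ξ : Ordinal, Dit (ξ + 1) = gradedDefense att m n (Dit ξ) := by
    intro ξ
    rw [Ordinal.add_one_eq_succ]
    exact Ordinal.limitRecOn_succ _ _ _ _
  have hlim : ∀ ξ : Ordinal, Order.IsSuccLimit ξ → Dit ξ = ⋃ (o : Ordinal) (_ : o < ξ), Dit o := by
    intro ξ h
    exact Ordinal.limitRecOn_limit _ _ _ _ h
  have hadm := iter_admissible att ℓ m n hml hln E hE Dit h0 hsucc hlim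
  have hsubL : ∀ ξ : Ordinal, Dit ξ ⊆ L := by
    intro ξ
    induction ξ using Ordinal.limitRecOn with
    | zero => rw [h0]; exact hL.2.1
    | add_one o ih =>
        have hs := hsucc o
        rw [Ordinal.add_one_eq_succ] at hs ⊢
        rw [hs, ← hL.1]
        exact defense_mono att ih
    | limit o ho ih =>
        rw [hlim o ho]
        exact Set.iUnion₂_subset fun η hη => ih η hη
  obtain ⟨ξ, hξ⟩ := exists_fixpoint att m n Dit hsucc (fun ξ η h => (hadm ξ).2 η h)
    (fun ξ => (hadm ξ).1.2)
  have hE0 : E ⊆ Dit ξ := by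
    have h1 : Dit 0 ⊆ Dit ξ := (hadm ξ).2 0 (zero_le (a := ξ))
    rwa [h0] at h1
  have hLeq : L = Dit ξ := subset_antisymm (hL.2.2 (Dit ξ) hξ hE0) (hsubL ξ)
  refine ⟨⟨?_, hL.1.symm⟩, ?_⟩
  · rw [hLeq]; exact (hadm ξ).1.1
  · intro E' hE' hEE'
    exact hL.2.2 E' hE'.2.symm hEE'

end Helpers

/-- If `n ≥ ℓ ≥ m` and `E` is ℓmn-admissible then (a) every transfinite iterate of the
graded defense function starting at `E` is ℓmn-admissible, and (b) the least fixed point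
of `D_n^m` containing `E` is an ℓmn-complete extension contained in every ℓmn-complete
extension containing `E`; in particular there is a ⊆-least ℓmn-complete extension
containing `E`. -/
theorem iterates_admissible_and_least_complete {A : Type*} [Nonempty A]
    (att : A → A → Prop)
    (ℓ m n : ℕ) (hℓ : 0 < ℓ) (hm : 0 < m) (hn : 0 < n)
    (hml : m ≤ ℓ) (hln : ℓ ≤ n)
    (E : Set A) (hE : IsAdmissible att ℓ m n E)
    (Dit : Ordinal → Set A)
    (h0 : Dit 0 = E)
    (hsucc : ∀ ξ : Ordinal, Dit (ξ + 1) = gradedDefense att m n (Dit ξ))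
    (hlim : ∀ ξ : Ordinal, Order.IsSuccLimit ξ → Dit ξ = ⋃ (o : Ordinal) (_ : o < ξ), Dit o) :
    (∀ ξ : Ordinal, IsAdmissible att ℓ m n (Dit ξ)) ∧
    (∀ L : Set A, IsLfpOver (gradedDefense att m n) E L →
      IsCompleteExt att ℓ m n L ∧
        ∀ E' : Set A, IsCompleteExt att ℓ m n E' → E ⊆ E' → L ⊆ E') ∧
    (∃ L : Set A, IsCompleteExt att ℓ m n L ∧ E ⊆ L ∧
      ∀ E' : Set A, IsCompleteExt att ℓ m n E' → E ⊆ E' → L ⊆ E') := by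
  refine ⟨fun ξ => (iter_admissible att ℓ m n hml hln E hE Dit h0 hsucc hlim ξ).1,
    least_complete att ℓ m n hml hln E hE, ?_⟩
  obtain ⟨L, hL⟩ := exists_lfp att m n E hE.2
  obtain ⟨hc, hmin⟩ := least_complete att ℓ m n hml hln E hE L hL
  exact ⟨L, hc, hL.2.1, hmin⟩
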